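/- arXiv:2107.14702 — 3 statements merged into one kernel-verified Lean document; each statement's English description precedes it below -/
import Mathlib

section
/- Fix models M1, M2, M and let π = π^{M1}, ν = ν^{M2}_{π^{M1}}. Define the Bellman error at step h by L(M1,M2,M,h) := E_{(x_h,a_h,b_h) ∼ P^{M2}_{M1}}[ E_{(r,x') ∼ M}[r + Q_M(x', π, ν)] − E_{(r,x') ∼ M*}[r + Q_M(x', π, ν)] ], where M* is the true model. Then Q_M(x1, π, ν) − V_1^{π,ν}(x1) = Σ_{h=1}^H L(M1, M2, M, h). -/
/-!
Let `gap h = ∑ x, dist h x * (QM h x - QStar h x)` be the expected value gap at step `h`.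
Adding and subtracting the mixed term `∑ y, PStar h x y * QM (h + 1) y` inside the two Bellman
equations splits `gap h` into the Bellman error `L h` plus a `PStar h`-average of the gap at step
`h + 1`; since `dist (h + 1)` is the push-forward of `dist h` under `PStar h`, that average is
`gap (h + 1)`. Hence `L h = gap h - gap (h + 1)`, and the sum telescopes to
`gap 1 - gap (H + 1) = (QM 1 x1 - QStar 1 x1) - 0`.
-/

open Finset

theorem sum_vecMul_mul {S R : Type*} [Fintype S] [CommSemiring R] (d : S → R)
    (P : S → S → R) (g : S → R) :
    ∑ y, (∑ x, d x * P x y) * g y = ∑ x, d x * ∑ y, P x y * g y :=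
  (Matrix.dotProduct_mulVec d P g).symm

theorem sum_mul_bellman_sub_eq {S R : Type*} [Fintype S] [CommRing R]
    (d d' r r' Q Q' V V' : S → R) (P P' : S → S → R)
    (hQ : ∀ x, Q x = r x + ∑ y, P x y * Q' y)
    (hV : ∀ x, V x = r' x + ∑ y, P' x y * V' y)
    (hd' : ∀ y, d' y = ∑ x, d x * P' x y) :
    ∑ x, d x * (Q x - V x) =
      ∑ x, d x * ((r x + ∑ y, P x y * Q' y) - (r' x + ∑ y, P' x y * Q' y)) +
        ∑ y, d' y * (Q' y - V' y) := by
  simp only [hd', sum_vecMul_mul, ← sum_add_distrib, ← mul_add]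
  refine sum_congr rfl fun x _ => ?_
  simp only [hQ, hV, mul_sub, sum_sub_distrib]
  ring

theorem stmt_3_general {S : Type*} [Fintype S] [DecidableEq S] (H : ℕ) (x1 : S)
    (rM rStar : ℕ → S → ℝ) (PM PStar : ℕ → S → S → ℝ)
    (QM QStar : ℕ → S → ℝ)
    (hQMend : ∀ x, QM (H + 1) x = 0) (hQSend : ∀ x, QStar (H + 1) x = 0)
    (hQM : ∀ h ∈ Finset.Icc 1 H, ∀ x,
      QM h x = rM h x + ∑ y, PM h x y * QM (h + 1) y)
    (hQS : ∀ h ∈ Finset.Icc 1 H, ∀ x,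
      QStar h x = rStar h x + ∑ y, PStar h x y * QStar (h + 1) y)
    (dist : ℕ → S → ℝ)
    (hd1 : ∀ x, dist 1 x = if x = x1 then 1 else 0)
    (hdstep : ∀ h ∈ Finset.Icc 1 H, ∀ y,
      dist (h + 1) y = ∑ x, dist h x * PStar h x y)
    (L : ℕ → ℝ)
    (hL : ∀ h ∈ Finset.Icc 1 H, L h = ∑ x, dist h x *
      ((rM h x + ∑ y, PM h x y * QM (h + 1) y) -
        (rStar h x + ∑ y, PStar h x y * QM (h + 1) y))) :
    QM 1 x1 - QStar 1 x1 = ∑ h ∈ Finset.Icc 1 H, L h := by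
  set gap : ℕ → ℝ := fun h => ∑ x, dist h x * (QM h x - QStar h x)
  have hL_gap : ∀ h ∈ Icc 1 H, L h = -(gap (h + 1) - gap h) := fun h hh => by
    rw [hL h hh, neg_sub, eq_sub_iff_add_eq]
    exact (sum_mul_bellman_sub_eq _ _ _ _ _ _ _ _ _ _
      (hQM h hh) (hQS h hh) (hdstep h hh)).symm
  have hgap_one : gap 1 = QM 1 x1 - QStar 1 x1 := by simp [gap, hd1]
  have hgap_end : gap (H + 1) = 0 := by simp [gap, hQMend, hQSend]
  rw [sum_congr rfl hL_gap, sum_neg_distrib, ← Ico_add_one_right_eq_Icc,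
    sum_Ico_sub gap (by omega), hgap_one, hgap_end]
  ring

/-- Simulation lemma for Markov games: with the policy pair (π,ν) fixed, a model is
an (expected reward, transition kernel) pair over a finite state space; `QM` is the
Q-value under model M, `QStar` the true value function, `dist h` the state
distribution at step h induced by executing the policies in the true model, and
`L h` the Bellman error of M at step h; then
Q_M(x1,π,ν) − V₁^{π,ν}(x1) = Σ_{h=1}^H L(M1,M2,M,h). -/
theorem stmt_3 {S : Type*} [Fintype S] [DecidableEq S] (H : ℕ) (x1 : S)
    (rM rStar : ℕ → S → ℝ) (PM PStar : ℕ → S → S → ℝ)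
    (hPM : ∀ h x, (∀ y, 0 ≤ PM h x y) ∧ ∑ y, PM h x y = 1)
    (hPStar : ∀ h x, (∀ y, 0 ≤ PStar h x y) ∧ ∑ y, PStar h x y = 1)
    (QM QStar : ℕ → S → ℝ)
    (hQMend : ∀ x, QM (H + 1) x = 0) (hQSend : ∀ x, QStar (H + 1) x = 0)
    (hQM : ∀ h ∈ Finset.Icc 1 H, ∀ x,
      QM h x = rM h x + ∑ y, PM h x y * QM (h + 1) y)
    (hQS : ∀ h ∈ Finset.Icc 1 H, ∀ x,
      QStar h x = rStar h x + ∑ y, PStar h x y * QStar (h + 1) y)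
    (dist : ℕ → S → ℝ)
    (hd1 : ∀ x, dist 1 x = if x = x1 then 1 else 0)
    (hdstep : ∀ h ∈ Finset.Icc 1 H, ∀ y,
      dist (h + 1) y = ∑ x, dist h x * PStar h x y)
    (L : ℕ → ℝ)
    (hL : ∀ h ∈ Finset.Icc 1 H, L h = ∑ x, dist h x *
      ((rM h x + ∑ y, PM h x y * QM (h + 1) y) -
        (rStar h x + ∑ y, PStar h x y * QM (h + 1) y))) :
    QM 1 x1 - QStar 1 x1 = ∑ h ∈ Finset.Icc 1 H, L h :=
  stmt_3_general H x1 rM rStar PM PStar QM QStar hQMend hQSend hQM hQS dist hd1 hdstep L hL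
end

section
/- Let {φ_t}_{t≥1} be a sequence in ℝ^d with ‖φ_t‖₂ ≤ 1 for all t, let Λ_0 be positive definite with smallest eigenvalue at least 1, and Λ_t = Λ_0 + Σ_{i=1}^t φ_i φ_iᵀ. Then log(det Λ_t / det Λ_0) ≤ Σ_{i=1}^t φ_iᵀ Λ_{i-1}^{-1} φ_i ≤ 2 log(det Λ_t / det Λ_0). -/
/-!
By the matrix determinant lemma, `det Λ_i = det Λ_{i-1} * (1 + u_i)` with
`u_i = φ_iᵀ Λ_{i-1}⁻¹ φ_i`, so `log (det Λ_t / det Λ_0) = ∑ log (1 + u_i)`. Every `Λ_i` dominates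
`Λ_0`, hence the identity, and `‖φ_i‖ ≤ 1`; this forces `0 ≤ u_i ≤ 1`, where
`u / 2 ≤ log (1 + u) ≤ u`.
-/

open Matrix

namespace Matrix

section RankOneUpdate

variable {n : Type*} [Fintype n] [DecidableEq n] {α : Type*} [CommRing α]

theorem det_add_vecMulVec {A : Matrix n n α} (hA : IsUnit A.det) (u v : n → α) :
    (A + vecMulVec u v).det = A.det * (1 + v ⬝ᵥ A⁻¹ *ᵥ u) := by
  rw [vecMulVec_eq Unit, det_add_replicateCol_mul_replicateRow hA]
  congr 1
  rw [det_unique]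
  simp only [PUnit.default_eq_unit, add_apply, one_apply_eq, mul_apply, replicateRow_apply,
    replicateCol_apply, Finset.sum_mul, mul_assoc, dotProduct, mulVec, Finset.mul_sum,
    add_right_inj]
  exact Finset.sum_comm

theorem det_eq_mul_prod_of_rankOne_updates (Λ : ℕ → Matrix n n α) (φ : ℕ → n → α)
    (hunit : ∀ k, IsUnit (Λ k).det)
    (hΛ : ∀ k, Λ (k + 1) = Λ k + vecMulVec (φ (k + 1)) (φ (k + 1))) (t : ℕ) :
    (Λ t).det = (Λ 0).det * ∏ i ∈ Finset.Icc 1 t, (1 + φ i ⬝ᵥ (Λ (i - 1))⁻¹ *ᵥ φ i) := by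
  induction t with
  | zero => simp
  | succ k ih =>
    rw [Finset.prod_Icc_succ_top (by omega), ← mul_assoc, ← ih, hΛ, det_add_vecMulVec (hunit k),
      Nat.add_sub_cancel]

end RankOneUpdate

variable {n : Type*} [Fintype n]

theorem dotProduct_le_dotProduct_mulVec_add {M P : Matrix n n ℝ}
    (hM : ∀ x, x ⬝ᵥ x ≤ x ⬝ᵥ M *ᵥ x) (hP : P.PosSemidef) (x : n → ℝ) :
    x ⬝ᵥ x ≤ x ⬝ᵥ (M + P) *ᵥ x := by
  have hPx := hP.dotProduct_mulVec_nonneg x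
  rw [star_trivial] at hPx
  rw [add_mulVec, dotProduct_add]
  linarith [hM x]

variable [DecidableEq n]

theorem isUnit_det_of_dotProduct_le {M : Matrix n n ℝ} (hM : ∀ x, x ⬝ᵥ x ≤ x ⬝ᵥ M *ᵥ x) :
    IsUnit M.det := by
  refine isUnit_iff_ne_zero.mpr fun hdet => ?_
  obtain ⟨x, hx, hMx⟩ := exists_mulVec_eq_zero_iff.mpr hdet
  have hxx := hM x
  rw [hMx, dotProduct_zero] at hxx
  exact hx (dotProduct_self_eq_zero.mp (le_antisymm hxx (dotProduct_self_star_nonneg x)))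

theorem dotProduct_inv_mulVec_mem_Icc {M : Matrix n n ℝ} (hM : ∀ x, x ⬝ᵥ x ≤ x ⬝ᵥ M *ᵥ x)
    (v : n → ℝ) : v ⬝ᵥ M⁻¹ *ᵥ v ∈ Set.Icc 0 (v ⬝ᵥ v) := by
  set y := M⁻¹ *ᵥ v
  have hMy : M *ᵥ y = v := by
    rw [mulVec_mulVec, mul_nonsing_inv _ (isUnit_det_of_dotProduct_le hM), one_mulVec]
  have hyy : y ⬝ᵥ y ≤ v ⬝ᵥ y := by simpa [hMy, dotProduct_comm] using hM y
  have hy0 : 0 ≤ y ⬝ᵥ y := dotProduct_self_star_nonneg y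
  have hv0 : 0 ≤ v ⬝ᵥ v := dotProduct_self_star_nonneg v
  have hcs : (v ⬝ᵥ y) ^ 2 ≤ (v ⬝ᵥ v) * (y ⬝ᵥ y) := by
    simpa [dotProduct, sq] using Finset.sum_mul_sq_le_sq_mul_sq Finset.univ v y
  -- `(v ⬝ᵥ y)² ≤ (v ⬝ᵥ v) (y ⬝ᵥ y) ≤ (v ⬝ᵥ v) (v ⬝ᵥ y)`
  exact ⟨hy0.trans hyy, by nlinarith⟩

end Matrix

theorem Real.log_one_add_le_self {u : ℝ} (hu : -1 < u) : Real.log (1 + u) ≤ u :=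
  (Real.log_le_sub_one_of_pos (by linarith)).trans_eq (add_sub_cancel_left 1 u)

theorem Real.le_two_mul_log_one_add {u : ℝ} (h0 : 0 ≤ u) (h1 : u ≤ 1) :
    u ≤ 2 * Real.log (1 + u) := by
  have hlog := Real.one_sub_inv_le_log_of_pos (by linarith : 0 < 1 + u)
  have hdiv : u / 2 ≤ 1 - (1 + u)⁻¹ := by
    rw [show 1 - (1 + u)⁻¹ = u / (1 + u) by field_simp; ring]
    exact div_le_div_of_nonneg_left h0 (by linarith) (by linarith)
  linarith

theorem stmt_6_general {d : ℕ} (t : ℕ) (φ : ℕ → Fin d → ℝ)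
    (hφ : ∀ i, Real.sqrt (φ i ⬝ᵥ φ i) ≤ 1)
    (Λ₀ : Matrix (Fin d) (Fin d) ℝ)
    (heig : ∀ x : Fin d → ℝ, x ⬝ᵥ x ≤ x ⬝ᵥ Λ₀ *ᵥ x)
    (Λ : ℕ → Matrix (Fin d) (Fin d) ℝ)
    (hΛ : ∀ s, Λ s = Λ₀ + ∑ i ∈ Finset.Icc 1 s, vecMulVec (φ i) (φ i)) :
    Real.log ((Λ t).det / Λ₀.det) ≤
      ∑ i ∈ Finset.Icc 1 t, φ i ⬝ᵥ (Λ (i - 1))⁻¹ *ᵥ φ i ∧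
    ∑ i ∈ Finset.Icc 1 t, φ i ⬝ᵥ (Λ (i - 1))⁻¹ *ᵥ φ i ≤
      2 * Real.log ((Λ t).det / Λ₀.det) := by
  have hge (s : ℕ) : ∀ x, x ⬝ᵥ x ≤ x ⬝ᵥ Λ s *ᵥ x := by
    rw [hΛ s]
    refine dotProduct_le_dotProduct_mulVec_add heig (posSemidef_sum _ fun i _ => ?_)
    simpa using posSemidef_vecMulVec_self_star (φ i)
  have hstep (k : ℕ) : Λ (k + 1) = Λ k + vecMulVec (φ (k + 1)) (φ (k + 1)) := by
    rw [hΛ, hΛ, Finset.sum_Icc_succ_top (by omega), add_assoc]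
  have hΛ₀ : Λ 0 = Λ₀ := by simp [hΛ]
  set u := fun i => φ i ⬝ᵥ (Λ (i - 1))⁻¹ *ᵥ φ i
  have hu (i : ℕ) : u i ∈ Set.Icc 0 1 := by
    obtain ⟨h0, h1⟩ := dotProduct_inv_mulVec_mem_Icc (hge (i - 1)) (φ i)
    exact ⟨h0, h1.trans (Real.sqrt_le_one.mp (hφ i))⟩
  have hdet : (Λ t).det / Λ₀.det = ∏ i ∈ Finset.Icc 1 t, (1 + u i) := by
    rw [det_eq_mul_prod_of_rankOne_updates Λ φ (fun k => isUnit_det_of_dotProduct_le (hge k))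
      hstep, hΛ₀, mul_div_cancel_left₀ _ (isUnit_det_of_dotProduct_le heig).ne_zero]
  rw [hdet, Real.log_prod fun i _ => by linarith [(hu i).1], Finset.mul_sum]
  exact ⟨Finset.sum_le_sum fun i _ => Real.log_one_add_le_self (by linarith [(hu i).1]),
    Finset.sum_le_sum fun i _ => Real.le_two_mul_log_one_add (hu i).1 (hu i).2⟩

/-- Elliptical Potential Lemma. -/
theorem stmt_6 {d : ℕ} (t : ℕ) (φ : ℕ → Fin d → ℝ)
    (hφ : ∀ i, Real.sqrt (φ i ⬝ᵥ φ i) ≤ 1)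
    (Λ₀ : Matrix (Fin d) (Fin d) ℝ) (hΛ₀ : Λ₀.PosDef)
    (heig : ∀ x : Fin d → ℝ, x ⬝ᵥ x ≤ x ⬝ᵥ Λ₀ *ᵥ x)
    (Λ : ℕ → Matrix (Fin d) (Fin d) ℝ)
    (hΛ : ∀ s, Λ s = Λ₀ + ∑ i ∈ Finset.Icc 1 s, vecMulVec (φ i) (φ i)) :
    Real.log ((Λ t).det / Λ₀.det) ≤
      ∑ i ∈ Finset.Icc 1 t, φ i ⬝ᵥ (Λ (i - 1))⁻¹ *ᵥ φ i ∧
    ∑ i ∈ Finset.Icc 1 t, φ i ⬝ᵥ (Λ (i - 1))⁻¹ *ᵥ φ i ≤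
      2 * Real.log ((Λ t).det / Λ₀.det) :=
  stmt_6_general t φ hφ Λ₀ heig Λ hΛ
end

section
/- Let V ⊂ ℝ^d be closed and bounded, p ∈ ℝ^d, and B any origin-centered ellipsoid containing V. Suppose there exists v ∈ V with pᵀv ≥ κ > 0, and let B₊ be the minimum-volume origin-centered enclosing ellipsoid of {v ∈ B : |pᵀv| ≤ κ/(3√d)}. Then vol(B₊)/vol(B) ≤ 3/5. -/
open Matrix MeasureTheory

/-- The origin-centered ellipsoid determined by a positive definite matrix. -/
def ellipsoid {d : ℕ} (A : Matrix (Fin d) (Fin d) ℝ) : Set (Fin d → ℝ) :=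
  {x | x ⬝ᵥ A *ᵥ x ≤ 1}

/-!
The slab `{w ∈ E_A : |p ⬝ w| ≤ t}`, `t = κ / (3√d)`, lies in the ellipsoid of
`A' = (1 - δ) A + (4 / κ²) p pᵀ` with `δ = 4 / (9d)`, because on the slab
`wᵀ A' w ≤ (1 - δ) + 4 t² / κ² = 1`. By the matrix determinant lemma
`det A' = (1 - δ)^d det A (1 + 4 pᵀA⁻¹p / ((1 - δ) κ²))`, and `pᵀA⁻¹p ≥ (p ⬝ v)² ≥ κ²` by
Cauchy–Schwarz since `v ∈ E_A`. Bernoulli's inequality then gives `det A' ≥ (5/3)² det A`.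
Since `vol E_A` is proportional to `(det A)^(-1/2)`, the ellipsoid of `A'` has at most `3/5` of
the volume of `E_A`, and so does the minimal ellipsoid containing the slab.
-/

variable {d : ℕ}

lemma dotProduct_transpose_mul_self_mulVec (B : Matrix (Fin d) (Fin d) ℝ) (x : Fin d → ℝ) :
    x ⬝ᵥ (Bᵀ * B) *ᵥ x = (B *ᵥ x) ⬝ᵥ (B *ᵥ x) := by
  rw [← mulVec_mulVec, dotProduct_mulVec, vecMul_transpose]

lemma ellipsoid_transpose_mul_self (B : Matrix (Fin d) (Fin d) ℝ) :
    ellipsoid (Bᵀ * B) = toLin' B ⁻¹' ellipsoid 1 := by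
  ext x
  simp [ellipsoid, dotProduct_transpose_mul_self_mulVec]

open scoped MatrixOrder in
lemma volume_ellipsoid {A : Matrix (Fin d) (Fin d) ℝ} (hA : A.PosDef) :
    volume (ellipsoid A) =
      ENNReal.ofReal (√A.det)⁻¹ * volume (ellipsoid (1 : Matrix (Fin d) (Fin d) ℝ)) := by
  obtain ⟨B, rfl⟩ := CStarAlgebra.nonneg_iff_eq_star_mul_self.mp hA.posSemidef.nonneg
  have hB : star B = Bᵀ := conjTranspose_eq_transpose_of_trivial B
  have hdet : (star B * B).det = B.det ^ 2 := by rw [hB, det_mul, det_transpose, sq]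
  have hB0 : B.det ≠ 0 := fun h => hA.det_pos.ne' (by rw [hdet, h]; ring)
  rw [hB, ellipsoid_transpose_mul_self,
    Measure.addHaar_preimage_linearMap _ (by rwa [LinearMap.det_toLin']),
    LinearMap.det_toLin', ← hB, hdet, Real.sqrt_sq_eq_abs, abs_inv]

lemma volume_ellipsoid_le_of_det_le {A B : Matrix (Fin d) (Fin d) ℝ} (hA : A.PosDef)
    (hB : B.PosDef) {c : ℝ} (hc : 0 < c) (hdet : c ^ 2 * A.det ≤ B.det) :
    volume (ellipsoid B) ≤ ENNReal.ofReal c⁻¹ * volume (ellipsoid A) := by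
  rw [volume_ellipsoid hA, volume_ellipsoid hB, ← mul_assoc, ← ENNReal.ofReal_mul (by positivity),
    ← mul_inv]
  gcongr
  · exact mul_pos hc (Real.sqrt_pos.2 hA.det_pos)
  calc c * √A.det = √(c ^ 2 * A.det) := by
        rw [Real.sqrt_mul (by positivity), Real.sqrt_sq hc.le]
    _ ≤ √B.det := Real.sqrt_le_sqrt hdet

lemma Matrix.PosDef.sq_dotProduct_le {A : Matrix (Fin d) (Fin d) ℝ} (hA : A.PosDef)
    (p v : Fin d → ℝ) : (p ⬝ᵥ v) ^ 2 ≤ (p ⬝ᵥ A⁻¹ *ᵥ p) * (v ⬝ᵥ A *ᵥ v) := by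
  set u := A⁻¹ *ᵥ p
  have hu : A *ᵥ u = p := by
    rw [mulVec_mulVec, mul_nonsing_inv _ (isUnit_iff_ne_zero.2 hA.det_pos.ne'), one_mulVec]
  have hCS := LinearMap.BilinForm.apply_mul_apply_le_of_forall_zero_le (toLinearMap₂' ℝ A)
    (fun x => by simpa [toLinearMap₂'_apply'] using hA.posSemidef.dotProduct_mulVec_nonneg x) u v
  simp only [toLinearMap₂'_apply'] at hCS
  rwa [dotProduct_mulVec u, ← mulVec_transpose, ← conjTranspose_eq_transpose_of_trivial,
    hA.isHermitian.eq, hu, dotProduct_comm v, dotProduct_comm u, ← sq] at hCS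

lemma Matrix.PosDef.sq_dotProduct_le_of_mem_ellipsoid {A : Matrix (Fin d) (Fin d) ℝ}
    (hA : A.PosDef) (p : Fin d → ℝ) {v : Fin d → ℝ} (hv : v ∈ ellipsoid A) :
    (p ⬝ᵥ v) ^ 2 ≤ p ⬝ᵥ A⁻¹ *ᵥ p := by
  have hv : v ⬝ᵥ A *ᵥ v ≤ 1 := hv
  have hm : 0 ≤ p ⬝ᵥ A⁻¹ *ᵥ p := by
    simpa using hA.inv.posSemidef.dotProduct_mulVec_nonneg p
  calc (p ⬝ᵥ v) ^ 2 ≤ (p ⬝ᵥ A⁻¹ *ᵥ p) * (v ⬝ᵥ A *ᵥ v) := hA.sq_dotProduct_le p v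
    _ ≤ p ⬝ᵥ A⁻¹ *ᵥ p := mul_le_of_le_one_right hm hv

lemma dotProduct_vecMulVec_self_mulVec (p w : Fin d → ℝ) :
    w ⬝ᵥ vecMulVec p p *ᵥ w = (p ⬝ᵥ w) ^ 2 := by
  rw [vecMulVec_mulVec, op_smul_eq_smul, dotProduct_smul, smul_eq_mul, dotProduct_comm w, sq]

lemma Matrix.PosDef.smul_add_smul_vecMulVec {A : Matrix (Fin d) (Fin d) ℝ} (hA : A.PosDef)
    {α β : ℝ} (hα : 0 < α) (hβ : 0 ≤ β) (p : Fin d → ℝ) : (α • A + β • vecMulVec p p).PosDef :=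
  (hA.smul hα).add_posSemidef ((posSemidef_vecMulVec_self_star p).smul hβ)

lemma det_smul_add_smul_vecMulVec {A : Matrix (Fin d) (Fin d) ℝ} (hA : IsUnit A.det) {α : ℝ}
    (hα : α ≠ 0) (β : ℝ) (p : Fin d → ℝ) :
    (α • A + β • vecMulVec p p).det = α ^ d * A.det * (1 + β / α * (p ⬝ᵥ A⁻¹ *ᵥ p)) := by
  have hfactor : α • A + β • vecMulVec p p =
      A * (α • (1 + (β / α) • vecMulVec (A⁻¹ *ᵥ p) p)) := by
    rw [Matrix.mul_smul, Matrix.mul_add, Matrix.mul_smul, mul_vecMulVec, mulVec_mulVec,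
      mul_nonsing_inv _ hA, one_mulVec, Matrix.mul_one, smul_add, smul_smul, mul_div_cancel₀ _ hα]
  rw [hfactor, det_mul, det_smul, Fintype.card_fin, ← smul_vecMulVec, vecMulVec_eq (Fin 1),
    det_one_add_replicateCol_mul_replicateRow, dotProduct_smul, smul_eq_mul]
  ring

lemma setOf_abs_dotProduct_le_subset_ellipsoid (A : Matrix (Fin d) (Fin d) ℝ) (p : Fin d → ℝ)
    {α β t : ℝ} (hα : 0 ≤ α) (hβ : 0 ≤ β) (h : α + β * t ^ 2 ≤ 1) :
    {w ∈ ellipsoid A | |p ⬝ᵥ w| ≤ t} ⊆ ellipsoid (α • A + β • vecMulVec p p) := by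
  rintro w ⟨hwA, hwp⟩
  have hwA : w ⬝ᵥ A *ᵥ w ≤ 1 := hwA
  have hwp : (p ⬝ᵥ w) ^ 2 ≤ t ^ 2 := sq_le_sq' (abs_le.1 hwp).1 (abs_le.1 hwp).2
  show w ⬝ᵥ (α • A + β • vecMulVec p p) *ᵥ w ≤ 1
  rw [add_mulVec, dotProduct_add, smul_mulVec, smul_mulVec, dotProduct_smul, dotProduct_smul,
    dotProduct_vecMulVec_self_mulVec, smul_eq_mul, smul_eq_mul]
  nlinarith [mul_le_mul_of_nonneg_left hwA hα, mul_le_mul_of_nonneg_left hwp hβ]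

-- With `n = d` and `y = 4 pᵀA⁻¹p / κ²`, the right-hand side is `det A' / det A`.
lemma five_thirds_sq_le_one_sub_pow_mul_one_add_div {n : ℕ} (hn : 1 ≤ n) {y : ℝ} (hy : 4 ≤ y) :
    (5 / 3 : ℝ) ^ 2 ≤ (1 - 4 / (9 * n)) ^ n * (1 + y / (1 - 4 / (9 * n))) := by
  set δ : ℝ := 4 / (9 * n)
  have hn' : (1 : ℝ) ≤ n := by exact_mod_cast hn
  have hδ : 0 < δ := by positivity
  have hδ' : δ ≤ 4 / 9 := div_le_div_of_nonneg_left (by norm_num) (by norm_num) (by linarith)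
  have hbernoulli : 5 / 9 + δ ≤ (1 - δ) ^ (n - 1) := by
    have h := one_add_mul_le_pow (a := -δ) (by linarith) (n - 1)
    have hnδ : (n : ℝ) * δ = 4 / 9 := by simp only [δ]; field_simp
    have : ((n - 1 : ℕ) : ℝ) * δ = 4 / 9 - δ := by
      rw [Nat.cast_sub hn, Nat.cast_one, sub_mul, hnδ, one_mul]
    rw [← sub_eq_add_neg] at h
    linarith [mul_neg ((n - 1 : ℕ) : ℝ) δ]
  calc (5 / 3 : ℝ) ^ 2 ≤ (5 / 9 + δ) * (5 - δ) := by nlinarith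
    _ ≤ (1 - δ) ^ (n - 1) * (1 - δ + y) := by gcongr <;> linarith
    _ = (1 - δ) ^ n * (1 + y / (1 - δ)) := by
      rw [← Nat.sub_add_cancel hn, pow_succ, Nat.add_sub_cancel]
      have : 1 - δ ≠ 0 := by linarith
      field_simp

theorem stmt_14_general {d : ℕ} (hd : 1 ≤ d) (V : Set (Fin d → ℝ))
    (p : Fin d → ℝ) (κ : ℝ) (hκ : 0 < κ)
    (A : Matrix (Fin d) (Fin d) ℝ) (hA : A.PosDef) (hVA : V ⊆ ellipsoid A)
    (v : Fin d → ℝ) (hv : v ∈ V) (hpv : κ ≤ p ⬝ᵥ v)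
    (Aplus : Matrix (Fin d) (Fin d) ℝ)
    (hmin : ∀ A' : Matrix (Fin d) (Fin d) ℝ, A'.PosDef →
      {w ∈ ellipsoid A | |p ⬝ᵥ w| ≤ κ / (3 * Real.sqrt d)} ⊆ ellipsoid A' →
      volume (ellipsoid Aplus) ≤ volume (ellipsoid A')) :
    volume (ellipsoid Aplus) ≤ (3 / 5 : ENNReal) * volume (ellipsoid A) := by
  set α : ℝ := 1 - 4 / (9 * d)
  set β : ℝ := 4 / κ ^ 2
  have hα : 0 < α := by
    have : (4 / (9 * d) : ℝ) ≤ 4 / 9 :=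
      div_le_div_of_nonneg_left (by norm_num) (by norm_num) (by simpa using hd)
    linarith
  have hA' : (α • A + β • vecMulVec p p).PosDef := hA.smul_add_smul_vecMulVec hα (by positivity) p
  have hslab : α + β * (κ / (3 * √d)) ^ 2 = 1 := by
    rw [div_pow, mul_pow, Real.sq_sqrt (by positivity)]
    simp only [α, β]
    field_simp
    ring
  have hwidth : κ ^ 2 ≤ p ⬝ᵥ A⁻¹ *ᵥ p :=
    (pow_le_pow_left₀ hκ.le hpv 2).trans (hA.sq_dotProduct_le_of_mem_ellipsoid p (hVA hv))
  have hdet : (5 / 3 : ℝ) ^ 2 * A.det ≤ (α • A + β • vecMulVec p p).det := by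
    have hy : 4 ≤ β * (p ⬝ᵥ A⁻¹ *ᵥ p) := by
      rw [div_mul_eq_mul_div, le_div_iff₀ (by positivity)]; linarith
    rw [det_smul_add_smul_vecMulVec (isUnit_iff_ne_zero.2 hA.det_pos.ne') hα.ne',
      div_mul_eq_mul_div]
    nlinarith [five_thirds_sq_le_one_sub_pow_mul_one_add_div hd hy, hA.det_pos]
  calc volume (ellipsoid Aplus) ≤ volume (ellipsoid (α • A + β • vecMulVec p p)) :=
        hmin _ hA' (setOf_abs_dotProduct_le_subset_ellipsoid A p hα.le (by positivity) hslab.le)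
    _ ≤ ENNReal.ofReal (5 / 3)⁻¹ * volume (ellipsoid A) :=
        volume_ellipsoid_le_of_det_le hA hA' (by norm_num) hdet
    _ = 3 / 5 * volume (ellipsoid A) := by
      rw [inv_div, ENNReal.ofReal_div_of_pos (by norm_num)]; norm_num

/-- Ellipsoid volume-shrinkage lemma. -/
theorem stmt_14 {d : ℕ} (hd : 1 ≤ d) (V : Set (Fin d → ℝ))
    (hVclosed : IsClosed V) (hVbdd : Bornology.IsBounded V)
    (p : Fin d → ℝ) (κ : ℝ) (hκ : 0 < κ)
    (A : Matrix (Fin d) (Fin d) ℝ) (hA : A.PosDef) (hVA : V ⊆ ellipsoid A)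
    (v : Fin d → ℝ) (hv : v ∈ V) (hpv : κ ≤ p ⬝ᵥ v)
    (Aplus : Matrix (Fin d) (Fin d) ℝ) (hAplus : Aplus.PosDef)
    (hcover : {w ∈ ellipsoid A | |p ⬝ᵥ w| ≤ κ / (3 * Real.sqrt d)} ⊆ ellipsoid Aplus)
    (hmin : ∀ A' : Matrix (Fin d) (Fin d) ℝ, A'.PosDef →
      {w ∈ ellipsoid A | |p ⬝ᵥ w| ≤ κ / (3 * Real.sqrt d)} ⊆ ellipsoid A' →
      volume (ellipsoid Aplus) ≤ volume (ellipsoid A')) :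
    volume (ellipsoid Aplus) ≤ (3 / 5 : ENNReal) * volume (ellipsoid A) :=
  stmt_14_general hd V p κ hκ A hA hVA v hv hpv Aplus hmin
end
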